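/- Let N = N⁽¹⁾ ⊗ ... ⊗ N⁽ⁿ⁾ be a tensor product operator that is singular at exactly one site (i.e., exactly one factor N⁽ⁱ⁾ is singular, the others invertible). If |ψ⟩ is a fully entangled state, then N|ψ⟩ ≠ 0, and the state N|ψ⟩/‖N|ψ⟩‖ is not fully entangled: its reduced density matrix at site i is rank deficient. -/
import Mathlib


open Matrix BigOperators

noncomputable def tensorOp {n : ℕ} {d : Fin n → ℕ}
    (N : ∀ i, Matrix (Fin (d i)) (Fin (d i)) ℂ) :
    Matrix (∀ i, Fin (d i)) (∀ i, Fin (d i)) ℂ :=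
  fun f g => ∏ i, N i (f i) (g i)

noncomputable def reduced {n : ℕ} {d : Fin n → ℕ} (ψ : (∀ i, Fin (d i)) → ℂ) (i : Fin n) :
    Matrix (Fin (d i)) (Fin (d i)) ℂ :=
  fun a b => ∑ f : ∀ j, Fin (d j),
    if f i = a then ψ f * star (ψ (Function.update f i b)) else 0

noncomputable def FullyEntangled {n : ℕ} {d : Fin n → ℕ} (ψ : (∀ i, Fin (d i)) → ℂ) : Prop :=
  ∀ i, (reduced ψ i).rank = d i

/-- The squared Euclidean norm of a vector. -/
noncomputable def nsq {V : Type*} [Fintype V] (ψ : V → ℂ) : ℝ :=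
  ∑ f, Complex.normSq (ψ f)

section RankAux
variable {m l : Type*} [Fintype m] [Fintype l] [DecidableEq m]

lemma isUnit_of_rank_eq_card (A : Matrix m m ℂ) (h : A.rank = Fintype.card m) :
    IsUnit A := by
  rw [← Matrix.mulVec_surjective_iff_isUnit]
  have hrange : LinearMap.range A.mulVecLin = ⊤ := by
    apply Submodule.eq_top_of_finrank_eq
    rw [← Matrix.rank, h, Module.finrank_pi]
  intro v
  obtain ⟨w, hw⟩ := LinearMap.range_eq_top.mp hrange v
  exact ⟨w, hw⟩

lemma rank_smul_le (c : ℂ) (A : Matrix m l ℂ) : (c • A).rank ≤ A.rank := by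
  have : c • A = (c • (1 : Matrix m m ℂ)) * A := by
    rw [Matrix.smul_mul, Matrix.one_mul]
  rw [this]
  exact Matrix.rank_mul_le_right _ _

lemma isUnit_smul_one {c : ℂ} (hc : c ≠ 0) : IsUnit (c • (1 : Matrix m m ℂ)) := by
  rw [Matrix.isUnit_iff_isUnit_det, Matrix.det_smul, Matrix.det_one, mul_one]
  exact (hc.isUnit).pow _

omit [DecidableEq m] in
lemma rank_pos_of_ne_zero (A : Matrix m l ℂ) (h : A ≠ 0) : 1 ≤ A.rank := by
  by_contra hr
  push_neg at hr
  interval_cases h' : A.rank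
  · apply h
    have hrange : LinearMap.range A.mulVecLin = ⊥ :=
      Submodule.finrank_eq_zero.mp h'
    ext i j
    classical
    have hv : A *ᵥ Pi.single j 1 = 0 := by
      have hmem : A.mulVecLin (Pi.single j 1) ∈ LinearMap.range A.mulVecLin :=
        LinearMap.mem_range_self _ _
      rw [hrange, Submodule.mem_bot] at hmem
      exact hmem
    have := congrFun hv i
    simpa [Matrix.mulVec_single] using this

end RankAux

section Aux
variable {n : ℕ} {d : Fin n → ℕ}

lemma tensorOp_mul (A B : ∀ i, Matrix (Fin (d i)) (Fin (d i)) ℂ) :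
    tensorOp A * tensorOp B = tensorOp (fun i => A i * B i) := by
  ext f g
  simp only [tensorOp, Matrix.mul_apply, ← Finset.prod_mul_distrib]
  exact (Fintype.prod_sum (fun i c => A i (f i) c * B i c (g i))).symm

lemma tensorOp_one : tensorOp (fun i => (1 : Matrix (Fin (d i)) (Fin (d i)) ℂ)) = 1 := by
  ext f g
  simp only [tensorOp, Matrix.one_apply, Finset.prod_boole]
  by_cases h : f = g
  · simp [h]
  · rw [if_neg, if_neg h]
    simp only [Finset.mem_univ, forall_true_left]
    exact fun hall => h (funext hall)

lemma tensorOp_isUnit {A : ∀ i, Matrix (Fin (d i)) (Fin (d i)) ℂ}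
    (h : ∀ i, IsUnit (A i)) : IsUnit (tensorOp A) := by
  choose B hB1 _ using fun i => isUnit_iff_exists.mp (h i)
  have h1 : tensorOp A * tensorOp B = 1 := by
    rw [tensorOp_mul]
    have heq : (fun i => A i * B i) = fun i => (1 : Matrix (Fin (d i)) (Fin (d i)) ℂ) := by
      funext i; exact hB1 i
    rw [heq, tensorOp_one]
  exact ⟨⟨_, _, h1, mul_eq_one_comm.mp h1⟩, rfl⟩

/-- Swap the value of coordinate `i₀` through the transposition `swap c a`. -/
noncomputable def swapAt (i₀ : Fin n) (c a : Fin (d i₀)) :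
    (∀ i, Fin (d i)) ≃ (∀ i, Fin (d i)) :=
  Function.Involutive.toPerm
    (fun f => Function.update f i₀ (Equiv.swap c a (f i₀)))
    (by
      intro f
      funext j
      by_cases hj : j = i₀
      · subst hj; simp
      · simp [Function.update_of_ne hj])

lemma swapAt_apply (i₀ : Fin n) (c a : Fin (d i₀)) (f : ∀ i, Fin (d i)) :
    swapAt i₀ c a f = Function.update f i₀ (Equiv.swap c a (f i₀)) := rfl

/-- A sum over the fiber `{f | f i₀ = a}` of a function not depending on the
coordinate at `i₀` equals the sum over the fiber `{f | f i₀ = c}`. -/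
lemma sum_fiber_eq (i₀ : Fin n) (a c : Fin (d i₀)) (G : (∀ i, Fin (d i)) → ℂ)
    (hG : ∀ f x, G (Function.update f i₀ x) = G f) :
    ∑ f, (if f i₀ = a then G f else 0) = ∑ f, (if f i₀ = c then G f else 0) := by
  rw [← Equiv.sum_comp (swapAt i₀ c a) (fun f => if f i₀ = a then G f else 0)]
  apply Finset.sum_congr rfl
  intro f _
  have h1 : swapAt i₀ c a f i₀ = Equiv.swap c a (f i₀) := by simp [swapAt_apply]
  rw [h1, show G (swapAt i₀ c a f) = G f from hG _ _]
  congr 1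
  simp only [eq_iff_iff]
  constructor
  · intro h
    have := congrArg (Equiv.swap c a) h
    rwa [Equiv.swap_apply_self, Equiv.swap_apply_right] at this
  · intro h
    rw [h, Equiv.swap_apply_left]

/-- Matricization of `ψ` at site `i₀`. -/
noncomputable def mat (i₀ : Fin n) (ψ : (∀ i, Fin (d i)) → ℂ) :
    Matrix (Fin (d i₀)) (∀ i, Fin (d i)) ℂ :=
  fun a f => ψ (Function.update f i₀ a)

/-- Gram identity: `M Mᴴ = d i₀ • reduced ψ i₀`. -/
lemma mat_mul_conjTranspose (i₀ : Fin n) (ψ : (∀ i, Fin (d i)) → ℂ) :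
    mat i₀ ψ * (mat i₀ ψ)ᴴ = (d i₀ : ℂ) • reduced ψ i₀ := by
  ext a b
  set G : (∀ i, Fin (d i)) → ℂ :=
    fun f => ψ (Function.update f i₀ a) * star (ψ (Function.update f i₀ b)) with hGdef
  have hG : ∀ f x, G (Function.update f i₀ x) = G f := by
    intro f x; simp [hGdef, Function.update_idem]
  have h1 : (mat i₀ ψ * (mat i₀ ψ)ᴴ) a b = ∑ f, G f := by
    simp [mat, Matrix.mul_apply, Matrix.conjTranspose_apply, hGdef]
  have h2 : reduced ψ i₀ a b = ∑ f, (if f i₀ = a then G f else 0) := by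
    unfold reduced
    apply Finset.sum_congr rfl
    intro f _
    by_cases h : f i₀ = a
    · rw [if_pos h, if_pos h, hGdef]
      simp only [← h, Function.update_eq_self]
    · rw [if_neg h, if_neg h]
  have h3 : ∑ f, G f = ∑ _c : Fin (d i₀), ∑ f, (if f i₀ = a then G f else 0) := by
    have key : ∀ f, G f = ∑ c : Fin (d i₀), (if f i₀ = c then G f else 0) := by
      intro f
      rw [Finset.sum_ite_eq]
      simp
    rw [Finset.sum_congr rfl (fun f _ => key f), Finset.sum_comm]
    exact Finset.sum_congr rfl (fun c _ => sum_fiber_eq i₀ c a G hG)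
  rw [h1, h3, Finset.sum_const, Finset.card_univ, Fintype.card_fin]
  rw [Matrix.smul_apply, h2, nsmul_eq_mul, smul_eq_mul]

/-- The matricization of `(⊗ᵢ Nᵢ) ψ` at `i₀` factors through `N i₀` on the left and the
tensor product of the remaining factors on the right. -/
lemma mat_mulVec (i₀ : Fin n) (N : ∀ i, Matrix (Fin (d i)) (Fin (d i)) ℂ)
    (ψ : (∀ i, Fin (d i)) → ℂ) :
    mat i₀ (tensorOp N *ᵥ ψ) =
      N i₀ * mat i₀ ψ * (tensorOp (Function.update N i₀ 1))ᵀ := by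
  ext a f
  set P : (∀ i, Fin (d i)) → ℂ := fun h => ∏ i ∈ Finset.univ.erase i₀, N i (f i) (h i) with hPdef
  have hP : ∀ h x, P (Function.update h i₀ x) = P h := by
    intro h x
    apply Finset.prod_congr rfl
    intro i hi
    rw [Function.update_of_ne (Finset.ne_of_mem_erase hi)]
  have hL : mat i₀ (tensorOp N *ᵥ ψ) a f = ∑ h, N i₀ a (h i₀) * P h * ψ h := by
    simp only [mat, Matrix.mulVec, dotProduct, tensorOp]
    apply Finset.sum_congr rfl
    intro h _
    congr 1
    rw [← Finset.mul_prod_erase Finset.univ _ (Finset.mem_univ i₀),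
      Function.update_self]
    congr 1
    apply Finset.prod_congr rfl
    intro i hi
    rw [Function.update_of_ne (Finset.ne_of_mem_erase hi)]
  have hR : (N i₀ * mat i₀ ψ * (tensorOp (Function.update N i₀ 1))ᵀ) a f =
      ∑ c, ∑ h, (if h i₀ = f i₀ then N i₀ a c * ψ (Function.update h i₀ c) * P h else 0) := by
    simp only [Matrix.mul_apply, Matrix.transpose_apply, Finset.sum_mul]
    rw [Finset.sum_comm]
    apply Finset.sum_congr rfl
    intro c _
    apply Finset.sum_congr rfl
    intro h _
    have ht : tensorOp (Function.update N i₀ 1) f h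
        = (if f i₀ = h i₀ then 1 else 0) * P h := by
      unfold tensorOp
      rw [← Finset.mul_prod_erase Finset.univ _ (Finset.mem_univ i₀),
        Function.update_self, Matrix.one_apply]
      congr 1
      apply Finset.prod_congr rfl
      intro i hi
      rw [Function.update_of_ne (Finset.ne_of_mem_erase hi)]
    rw [ht, mat]
    by_cases hfh : h i₀ = f i₀
    · rw [if_pos hfh, if_pos hfh.symm]; ring
    · rw [if_neg hfh, if_neg (Ne.symm hfh)]; ring
  rw [hL, hR]
  have step : ∀ c : Fin (d i₀),
      (∑ h, (if h i₀ = f i₀ then N i₀ a c * ψ (Function.update h i₀ c) * P h else 0))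
      = ∑ h, (if h i₀ = c then N i₀ a c * ψ (Function.update h i₀ c) * P h else 0) := by
    intro c
    exact sum_fiber_eq i₀ (f i₀) c _ (by
      intro h x
      simp only [Function.update_idem, hP])
  rw [Finset.sum_congr rfl (fun c _ => step c), Finset.sum_comm]
  apply Finset.sum_congr rfl
  intro h _
  rw [Finset.sum_ite_eq]
  simp only [Finset.mem_univ, if_true]
  rw [Function.update_eq_self]
  ring

/-- Reducing a real-scaled state scales the reduced density matrix by the square. -/
lemma reduced_real_smul (r : ℝ) (φ : (∀ i, Fin (d i)) → ℂ) (i₀ : Fin n) :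
    reduced (r • φ) i₀ = ((r : ℂ) * (r : ℂ)) • reduced φ i₀ := by
  ext a b
  simp only [reduced, Matrix.smul_apply, smul_eq_mul, Finset.mul_sum]
  apply Finset.sum_congr rfl
  intro f _
  by_cases h : f i₀ = a
  · rw [if_pos h, if_pos h]
    simp only [Pi.smul_apply, Complex.real_smul, star_mul', Complex.conj_ofReal,
      RingHom.id_apply]
    rw [show (star ((r:ℝ):ℂ)) = ((r:ℝ):ℂ) by rw [Complex.star_def, Complex.conj_ofReal]]
    ring
  · rw [if_neg h, if_neg h, mul_zero]

end Aux

open ComplexOrder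

/-- If `N = N⁽¹⁾ ⊗ ... ⊗ N⁽ⁿ⁾` is singular at exactly one site `i₀` (there nonzero but
singular, elsewhere invertible) and `ψ` is fully entangled, then `N ψ ≠ 0` and the
normalized state `Nψ/‖Nψ‖` has a rank-deficient reduced density matrix at site `i₀`. -/
theorem singular_at_one_site {n : ℕ} {d : Fin n → ℕ}
    (ψ : (∀ i, Fin (d i)) → ℂ) (hψ0 : ψ ≠ 0) (hψ : FullyEntangled ψ)
    (N : ∀ i, Matrix (Fin (d i)) (Fin (d i)) ℂ) (i₀ : Fin n)
    (hN0 : N i₀ ≠ 0) (hsing : ¬ IsUnit (N i₀)) (hreg : ∀ j, j ≠ i₀ → IsUnit (N j)) :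
    (tensorOp N) *ᵥ ψ ≠ 0 ∧
    (reduced ((Real.sqrt (nsq ((tensorOp N) *ᵥ ψ)))⁻¹ • ((tensorOp N) *ᵥ ψ)) i₀).rank
      < d i₀ := by
  classical
  set φ := tensorOp N *ᵥ ψ with hφdef
  -- the local dimension at i₀ is positive
  have hd : 0 < d i₀ := by
    by_contra h
    push_neg at h
    have h0 : d i₀ = 0 := Nat.le_zero.mp h
    apply hψ0
    funext f
    have x : Fin (d i₀) := f i₀
    rw [h0] at x
    exact x.elim0
  have hdC : (d i₀ : ℂ) ≠ 0 := Nat.cast_ne_zero.mpr hd.ne'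
  -- the reduced state of ψ at i₀ is invertible
  have hRψ : IsUnit (reduced ψ i₀) :=
    isUnit_of_rank_eq_card _ (by rw [hψ i₀, Fintype.card_fin])
  have hGram : IsUnit (mat i₀ ψ * (mat i₀ ψ)ᴴ) := by
    rw [mat_mul_conjTranspose]
    have heq : (d i₀ : ℂ) • reduced ψ i₀ =
        ((d i₀ : ℂ) • (1 : Matrix (Fin (d i₀)) (Fin (d i₀)) ℂ)) * reduced ψ i₀ := by
      rw [Matrix.smul_mul, Matrix.one_mul]
    rw [heq]
    exact (isUnit_smul_one hdC).mul hRψ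
  -- the tensor product of the remaining (invertible, resp. identity) factors is invertible
  have hB : IsUnit (tensorOp (Function.update N i₀ 1)) := by
    apply tensorOp_isUnit
    intro j
    by_cases hj : j = i₀
    · subst hj; rw [Function.update_self]; exact isUnit_one
    · rw [Function.update_of_ne hj]; exact hreg j hj
  have hBt : IsUnit ((tensorOp (Function.update N i₀ 1))ᵀ).det := by
    rw [Matrix.det_transpose]
    exact (Matrix.isUnit_iff_isUnit_det _).mp hB
  -- key rank identity
  have hkey : (mat i₀ φ).rank = (N i₀ * mat i₀ ψ).rank := by
    rw [hφdef, mat_mulVec, Matrix.rank_mul_eq_left_of_isUnit_det _ _ hBt]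
  -- lower bound: rank of N i₀ is at most rank of mat i₀ φ
  have hlow : (N i₀).rank ≤ (mat i₀ φ).rank := by
    rw [hkey]
    have h1 : (N i₀ * mat i₀ ψ * (mat i₀ ψ)ᴴ).rank = (N i₀).rank := by
      rw [Matrix.mul_assoc]
      exact Matrix.rank_mul_eq_left_of_isUnit_det _ _
        ((Matrix.isUnit_iff_isUnit_det _).mp hGram)
    calc (N i₀).rank = (N i₀ * mat i₀ ψ * (mat i₀ ψ)ᴴ).rank := h1.symm
      _ ≤ (N i₀ * mat i₀ ψ).rank := Matrix.rank_mul_le_left _ _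
  -- N i₀ has positive rank
  have hNpos : 1 ≤ (N i₀).rank := rank_pos_of_ne_zero _ hN0
  -- N i₀ has deficient rank
  have hNlt : (N i₀).rank < d i₀ := by
    have hle : (N i₀).rank ≤ d i₀ := by
      have := Matrix.rank_le_card_width (N i₀)
      rwa [Fintype.card_fin] at this
    rcases lt_or_eq_of_le hle with h | h
    · exact h
    · exact absurd (isUnit_of_rank_eq_card _ (by rw [h, Fintype.card_fin])) hsing
  constructor
  · -- φ ≠ 0
    intro h0
    have hm : mat i₀ φ = 0 := by
      ext a f
      rw [mat]
      rw [hφdef] at h0 ⊢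
      rw [h0]
      rfl
    rw [hm, Matrix.rank_zero] at hlow
    omega
  · -- rank deficiency of the normalized reduced state
    set r : ℝ := (Real.sqrt (nsq φ))⁻¹ with hrdef
    calc (reduced (r • φ) i₀).rank
        = (((r : ℂ) * (r : ℂ)) • reduced φ i₀).rank := by rw [reduced_real_smul]
      _ ≤ (reduced φ i₀).rank := rank_smul_le _ _
      _ = ((d i₀ : ℂ)⁻¹ • (mat i₀ φ * (mat i₀ φ)ᴴ)).rank := by
          rw [mat_mul_conjTranspose, inv_smul_smul₀ hdC]
      _ ≤ (mat i₀ φ * (mat i₀ φ)ᴴ).rank := rank_smul_le _ _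
      _ = (mat i₀ φ).rank := Matrix.rank_self_mul_conjTranspose _
      _ = (N i₀ * mat i₀ ψ).rank := hkey
      _ ≤ (N i₀).rank := Matrix.rank_mul_le_left _ _
      _ < d i₀ := hNlt
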